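/- arXiv:1601.03388 — 3 statements merged into one kernel-verified Lean document; each statement's English description precedes it below -/
import Mathlib

section
/- Let Ω = {ω₁,…,ωₙ} be a finite set, P a measure with weights p₁ ≥ p₂ ≥ … ≥ pₙ > 0, and Q a measure with weights 0 < q₁ ≤ q₂ ≤ … ≤ qₙ. Fix γ ≥ 0 and suppose k is such that q₁+…+q_k ≤ γ and q₁+…+q_{k+1} > γ (or k = n if Q(Ω) ≤ γ). Let à = {ω₁,…,ω_k}. Then for every subset A ⊆ Ω with Q(A) ≤ γ one has P(Ã) ≥ P(A). -/
/-!
A set `A` with `Q(A) ≤ γ` has at most `k` elements: since `q` is increasing, its `Q`-mass is at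
least that of the first `|A|` points, and the first `k + 1` points already weigh more than `γ`.
Since `p` is decreasing, the `P`-mass of `A` is at most that of the first `|A|` points, hence at
most that of the first `k`.
-/

open Finset

lemma Fin.val_le_val_apply_of_strictMono {m n : ℕ} {e : Fin m → Fin n} (he : StrictMono e)
    (j : Fin m) : (j : ℕ) ≤ e j := by
  have hcard := card_le_card_of_injOn e (s := Iic j) (t := Iic (e j))
    (fun i hi => by simpa using he.monotone (by simpa using hi)) he.injective.injOn
  simpa using hcard

/-- The paper's `{ω₁, …, ω_m}`, with points indexed from `0`. -/
def initialSegment (n m : ℕ) : Finset (Fin n) :=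
  univ.filter (fun i : Fin n => (i : ℕ) < m)

lemma initialSegment_mono {n m m' : ℕ} (h : m ≤ m') : initialSegment n m ⊆ initialSegment n m' :=
  fun _ hi => by simp only [initialSegment, mem_filter, mem_univ, true_and] at hi ⊢; omega

lemma initialSegment_eq_map_castLE {n m : ℕ} (hm : m ≤ n) :
    initialSegment n m = univ.map (Fin.castLEEmb hm) := by
  ext i
  simp only [initialSegment, mem_filter, mem_univ, true_and, mem_map, Fin.castLEEmb_apply]
  exact ⟨fun hi => ⟨⟨i, hi⟩, rfl⟩, by rintro ⟨j, rfl⟩; exact j.2⟩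

section OrderedSum

variable {M : Type*} [AddCommMonoid M] [PartialOrder M] [IsOrderedAddMonoid M] {n : ℕ}

lemma sum_le_sum_initialSegment_of_antitone {f : Fin n → M} (hf : Antitone f)
    (A : Finset (Fin n)) : ∑ i ∈ A, f i ≤ ∑ i ∈ initialSegment n #A, f i := by
  have hA : #A ≤ n := A.card_le_univ.trans_eq (Fintype.card_fin n)
  let e := A.orderEmbOfFin rfl
  calc ∑ i ∈ A, f i = ∑ j, f (e j) := by
        conv_lhs => rw [← A.map_orderEmbOfFin_univ rfl, sum_map]
        rfl
    _ ≤ ∑ j, f (Fin.castLE hA j) :=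
        sum_le_sum fun j _ => hf (Fin.val_le_val_apply_of_strictMono e.strictMono j)
    _ = ∑ i ∈ initialSegment n #A, f i := by
        rw [initialSegment_eq_map_castLE hA, sum_map]
        rfl

lemma sum_initialSegment_le_of_monotone {f : Fin n → M} (hf : Monotone f)
    (A : Finset (Fin n)) : ∑ i ∈ initialSegment n #A, f i ≤ ∑ i ∈ A, f i :=
  sum_le_sum_initialSegment_of_antitone (M := Mᵒᵈ) hf.dual_right A

end OrderedSum

theorem greedy_optimal_finite_general
    (n : ℕ) (p q : Fin n → ℝ)
    (hp_anti : Antitone p) (hp_pos : ∀ i, 0 < p i)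
    (hq_mono : Monotone q) (hq_pos : ∀ i, 0 < q i)
    (γ : ℝ) (k : ℕ)
    (h2 : k < n → γ < ∑ i ∈ Finset.univ.filter (fun i : Fin n => (i : ℕ) < k + 1), q i)
    (A : Finset (Fin n)) (hA : ∑ i ∈ A, q i ≤ γ) :
    ∑ i ∈ A, p i ≤ ∑ i ∈ Finset.univ.filter (fun i : Fin n => (i : ℕ) < k), p i := by
  have hcard : #A ≤ k := by
    by_contra! hkA
    have hkn : k < n := hkA.trans_le (A.card_le_univ.trans_eq (Fintype.card_fin n))
    have hγ : γ < ∑ i ∈ initialSegment n (k + 1), q i := h2 hkn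
    have hsub : ∑ i ∈ initialSegment n (k + 1), q i ≤ ∑ i ∈ initialSegment n #A, q i :=
      sum_le_sum_of_subset_of_nonneg (initialSegment_mono hkA) fun i _ _ => (hq_pos i).le
    have hmono := sum_initialSegment_le_of_monotone hq_mono A
    linarith
  calc ∑ i ∈ A, p i ≤ ∑ i ∈ initialSegment n #A, p i :=
        sum_le_sum_initialSegment_of_antitone hp_anti A
    _ ≤ ∑ i ∈ initialSegment n k, p i :=
        sum_le_sum_of_subset_of_nonneg (initialSegment_mono hcard) fun i _ _ => (hp_pos i).le

theorem greedy_optimal_finite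
    (n : ℕ) (p q : Fin n → ℝ)
    (hp_anti : Antitone p) (hp_pos : ∀ i, 0 < p i)
    (hq_mono : Monotone q) (hq_pos : ∀ i, 0 < q i)
    (γ : ℝ) (hγ : 0 ≤ γ) (k : ℕ) (hk : k ≤ n)
    (h1 : ∑ i ∈ Finset.univ.filter (fun i : Fin n => (i : ℕ) < k), q i ≤ γ)
    (h2 : k < n → γ < ∑ i ∈ Finset.univ.filter (fun i : Fin n => (i : ℕ) < k + 1), q i)
    (A : Finset (Fin n)) (hA : ∑ i ∈ A, q i ≤ γ) :
    ∑ i ∈ A, p i ≤ ∑ i ∈ Finset.univ.filter (fun i : Fin n => (i : ℕ) < k), p i :=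
  greedy_optimal_finite_general n p q hp_anti hp_pos hq_mono hq_pos γ k h2 A hA
end

section
/- Let s_k := S(1+u)^k(1+d)^{N-k} with S > 0, u > 0 > d > -1, let K̄ ≥ 0, p* := -d/(u-d) ∈ (0,1), and a_k := (s_k - K̄)⁺ · (p*)^k (1-p*)^{N-k}. If b_{N-1} := (s_N - K̄)⁺/(s_{N-1} - K̄)⁺ ≥ (1-p*)/p* (with the convention a/0 = ∞), then the sequence (a_k)_{k=0}^N is nondecreasing. -/
private lemma crr_s_step (S u d : ℝ) (N j : ℕ) (hS : 0 < S) (hu : 0 < u)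
    (hd1 : -1 < d) (hd : d < 0) (hj : j + 1 ≤ N) :
    S * (1 + u) ^ j * (1 + d) ^ (N - j) ≤ S * (1 + u) ^ (j + 1) * (1 + d) ^ (N - (j + 1)) := by
  have h1 : N - j = (N - (j + 1)) + 1 := by omega
  have h1d : (0:ℝ) < 1 + d := by linarith
  have hpos : (0:ℝ) ≤ S * (1 + u) ^ j * (1 + d) ^ (N - (j + 1)) := by positivity
  rw [h1, pow_succ]
  calc S * (1 + u) ^ j * ((1 + d) ^ (N - (j + 1)) * (1 + d))
      = (S * (1 + u) ^ j * (1 + d) ^ (N - (j + 1))) * (1 + d) := by ring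
    _ ≤ (S * (1 + u) ^ j * (1 + d) ^ (N - (j + 1))) * (1 + u) :=
        mul_le_mul_of_nonneg_left (by linarith) hpos
    _ = S * (1 + u) ^ (j + 1) * (1 + d) ^ (N - (j + 1)) := by ring

private lemma crr_s_mono (S u d : ℝ) (N : ℕ) (hS : 0 < S) (hu : 0 < u)
    (hd1 : -1 < d) (hd : d < 0) :
    ∀ b, b ≤ N → ∀ a, a ≤ b →
      S * (1 + u) ^ a * (1 + d) ^ (N - a) ≤ S * (1 + u) ^ b * (1 + d) ^ (N - b) := by
  intro b
  induction b with
  | zero =>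
    intro _ a ha
    have : a = 0 := by omega
    subst this; exact le_refl _
  | succ b ih =>
    intro hb a ha
    rcases Nat.lt_or_ge a (b + 1) with h | h
    · exact le_trans (ih (by omega) a (by omega)) (crr_s_step S u d N b hS hu hd1 hd hb)
    · have : a = b + 1 := by omega
      subst this; exact le_refl _

theorem crr_a_nondecreasing
    (S K u d : ℝ) (N : ℕ)
    (hS : 0 < S) (hK : 0 ≤ K) (hu : 0 < u) (hd : d < 0) (hd1 : -1 < d)
    (hyp : (1 - (-d / (u - d))) * max (S * (1 + u) ^ (N - 1) * (1 + d) ^ (N - (N - 1)) - K) 0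
        ≤ max (S * (1 + u) ^ N * (1 + d) ^ (N - N) - K) 0 * (-d / (u - d))) :
    ∀ k : ℕ, k + 1 ≤ N →
      max (S * (1 + u) ^ k * (1 + d) ^ (N - k) - K) 0
          * (-d / (u - d)) ^ k * (1 - (-d / (u - d))) ^ (N - k)
        ≤ max (S * (1 + u) ^ (k + 1) * (1 + d) ^ (N - (k + 1)) - K) 0
          * (-d / (u - d)) ^ (k + 1) * (1 - (-d / (u - d))) ^ (N - (k + 1)) := by
  intro k hk
  have hud : (0:ℝ) < u - d := by linarith
  have h1d : (0:ℝ) < 1 + d := by linarith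
  have h1u : (0:ℝ) < 1 + u := by linarith
  set p : ℝ := -d / (u - d) with hpdef
  have hp0 : 0 < p := div_pos (by linarith) hud
  have hp1 : p < 1 := by
    rw [hpdef, div_lt_one hud]; linarith
  have hpmul : p * (u - d) = -d := by
    rw [hpdef]; field_simp
  have h1pmul : (1 - p) * (u - d) = u := by
    rw [hpdef]; field_simp; ring
  -- the key pointwise inequality
  have key : (1 - p) * max (S * (1 + u) ^ k * (1 + d) ^ (N - k) - K) 0
      ≤ max (S * (1 + u) ^ (k + 1) * (1 + d) ^ (N - (k + 1)) - K) 0 * p := by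
    set x := S * (1 + u) ^ k * (1 + d) ^ (N - k) with hxdef
    set y := S * (1 + u) ^ (k + 1) * (1 + d) ^ (N - (k + 1)) with hydef
    have hxy : y * (1 + d) = x * (1 + u) := by
      rw [hxdef, hydef, show N - k = (N - (k + 1)) + 1 from by omega]; ring
    have hN1 : N - (N - 1) = 1 := by omega
    have hNN : N - N = 0 := by omega
    rw [hN1, hNN, pow_one, pow_zero, mul_one] at hyp
    set a := S * (1 + u) ^ (N - 1) * (1 + d) with hadef
    set b := S * (1 + u) ^ N with hbdef
    have hbpow : (1 + u) ^ N = (1 + u) ^ (N - 1) * (1 + u) := by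
      rw [← pow_succ]; congr 1; omega
    have hab : b * (1 + d) = a * (1 + u) := by
      rw [hadef, hbdef, hbpow]; ring
    have hxa : x ≤ a := by
      have := crr_s_mono S u d N hS hu hd1 hd (N - 1) (by omega) k (by omega)
      rwa [hN1, pow_one] at this
    have hab' : a ≤ b := by
      have := crr_s_mono S u d N hS hu hd1 hd N le_rfl (N - 1) (by omega)
      rwa [hN1, hNN, pow_one, pow_zero, mul_one] at this
    have hyx : x ≤ y := crr_s_step S u d N k hS hu hd1 hd hk
    clear_value x y a b
    by_cases hxK : x ≤ K
    · rw [max_eq_right (by linarith : x - K ≤ 0)]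
      have : 0 ≤ max (y - K) 0 * p := mul_nonneg (le_max_right _ _) hp0.le
      linarith
    · push_neg at hxK
      have haK : K < a := lt_of_lt_of_le hxK hxa
      have hbK : K < b := lt_of_lt_of_le haK hab'
      rw [max_eq_left (by linarith : 0 ≤ a - K), max_eq_left (by linarith : 0 ≤ b - K)] at hyp
      rw [max_eq_left (by linarith : 0 ≤ x - K), max_eq_left (by linarith : 0 ≤ y - K)]
      -- multiply hyp through by (u - d)
      have hypN : u * (a - K) ≤ (b - K) * (-d) := by
        have h := mul_le_mul_of_nonneg_right hyp hud.le
        have e1 : (1 - p) * (a - K) * (u - d) = u * (a - K) := by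
          linear_combination (a - K) * h1pmul
        have e2 : (b - K) * p * (u - d) = (b - K) * (-d) := by
          linear_combination (b - K) * hpmul
        rwa [e1, e2] at h
      have hypN2 : u * (a - K) * (1 + d) ≤ (a * (1 + u) - K * (1 + d)) * (-d) := by
        have h := mul_le_mul_of_nonneg_right hypN h1d.le
        have heq : (b - K) * (-d) * (1 + d) = (a * (1 + u) - K * (1 + d)) * (-d) := by
          linear_combination (-d) * hab
        rwa [heq] at h
      have key2 : u * (x - K) ≤ (y - K) * (-d) := by
        rw [← mul_le_mul_iff_of_pos_right h1d]
        have heq : (y - K) * (-d) * (1 + d) = (x * (1 + u) - K * (1 + d)) * (-d) := by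
          linear_combination (-d) * hxy
        rw [heq]
        rcases le_or_gt (u + d + 2 * u * d) 0 with hc | hc
        · nlinarith [mul_nonneg (by linarith : (0:ℝ) ≤ x - K)
              (by linarith : (0:ℝ) ≤ -(u + d + 2 * u * d)),
            mul_nonneg (mul_nonneg hK (by linarith : (0:ℝ) ≤ -d)) hud.le]
        · nlinarith [mul_nonneg (by linarith : (0:ℝ) ≤ a - x) hc.le, hypN2]
      rw [← mul_le_mul_iff_of_pos_right hud]
      have e1 : (1 - p) * (x - K) * (u - d) = u * (x - K) := by
        linear_combination (x - K) * h1pmul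
      have e2 : (y - K) * p * (u - d) = (y - K) * (-d) := by
        linear_combination (y - K) * hpmul
      rw [e1, e2]
      exact key2
  -- assemble
  have hMk : N - k = (N - (k + 1)) + 1 := by omega
  have hpow : (0:ℝ) ≤ p ^ k * (1 - p) ^ (N - (k + 1)) :=
    mul_nonneg (pow_nonneg hp0.le _) (pow_nonneg (by linarith) _)
  calc max (S * (1 + u) ^ k * (1 + d) ^ (N - k) - K) 0 * p ^ k * (1 - p) ^ (N - k)
      = ((1 - p) * max (S * (1 + u) ^ k * (1 + d) ^ (N - k) - K) 0)
          * (p ^ k * (1 - p) ^ (N - (k + 1))) := by rw [hMk, pow_succ]; ring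
    _ ≤ (max (S * (1 + u) ^ (k + 1) * (1 + d) ^ (N - (k + 1)) - K) 0 * p)
          * (p ^ k * (1 - p) ^ (N - (k + 1))) := mul_le_mul_of_nonneg_right key hpow
    _ = max (S * (1 + u) ^ (k + 1) * (1 + d) ^ (N - (k + 1)) - K) 0
          * p ^ (k + 1) * (1 - p) ^ (N - (k + 1)) := by rw [pow_succ]; ring
end

section
/- (Incomplete-market optimality, abstract form) Let 𝒬 be a nonempty set of probability measures, H ≥ 0, c ≥ 0 a constant, and x₀ ≥ 0. Suppose à is measurable with sup_{Q∈𝒬} E^Q[1_Ã(H-c)⁺] ≤ x₀ and P(Ã) ≥ P(A) for every measurable A with sup_{Q∈𝒬} E^Q[1_A(H-c)⁺] ≤ x₀. Let X be any nonnegative random variable with sup_{Q∈𝒬} E^Q[X] ≤ x₀. Then P((H - X)⁺ ≤ c) ≤ P(Ã); moreover, if Y is a nonnegative random variable with Y ≥ 1_Ã(H-c)⁺ pointwise, then P((H - Y)⁺ ≤ c) ≥ P(Ã). -/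
open MeasureTheory

/-!
Both claims rest on the pointwise equivalence `(H - X)⁺ ≤ c ↔ (H - c)⁺ ≤ X` for `X, c ≥ 0`.
For an admissible `X`, the success set `A = {(H - X)⁺ ≤ c}` satisfies `1_A (H - c)⁺ ≤ X`, so
`A` meets the budget constraint and the maximality of `Ã` gives `P A ≤ P Ã`. Conversely, if
`Y ≥ 1_Ã (H - c)⁺` then `Ã ⊆ {(H - Y)⁺ ≤ c}`.
-/

theorem max_sub_zero_le_of_max_sub_zero_le {α : Type*} [AddCommGroup α] [LinearOrder α]
    [IsOrderedAddMonoid α] {a b c : α} (hb : 0 ≤ b) (h : max (a - b) 0 ≤ c) :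
    max (a - c) 0 ≤ b :=
  max_le (sub_le_comm.1 ((le_max_left _ _).trans h)) hb

theorem indicator_max_sub_zero_le {Ω : Type*} {H X : Ω → ℝ} {c : ℝ} (hX : ∀ ω, 0 ≤ X ω) :
    {ω | max (H ω - X ω) 0 ≤ c}.indicator (fun ω => max (H ω - c) 0) ≤ X :=
  Set.indicator_le' (fun ω hω => max_sub_zero_le_of_max_sub_zero_le (hX ω) hω) fun ω _ => hX ω

theorem incomplete_market_optimality_general
    {Ω : Type*} [MeasurableSpace Ω]
    (P : Measure Ω)
    (𝒬 : Set (Measure Ω))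
    (H : Ω → ℝ) (hHm : Measurable H)
    (c x₀ : ℝ) (hc : 0 ≤ c)
    (Atil : Set Ω)
    (hmax : ∀ A : Set Ω, MeasurableSet A →
      (∀ Q ∈ 𝒬, ∫ ω, Set.indicator A (fun ω => max (H ω - c) 0) ω ∂Q ≤ x₀) →
      P A ≤ P Atil)
    (X : Ω → ℝ) (hXm : Measurable X) (hX0 : ∀ ω, 0 ≤ X ω)
    (hXint : ∀ Q ∈ 𝒬, Integrable X Q)
    (hXc : ∀ Q ∈ 𝒬, ∫ ω, X ω ∂Q ≤ x₀) :
    P {ω | max (H ω - X ω) 0 ≤ c} ≤ P Atil ∧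
    (∀ Y : Ω → ℝ, (∀ ω, 0 ≤ Y ω) →
      (∀ ω, Set.indicator Atil (fun ω => max (H ω - c) 0) ω ≤ Y ω) →
      P Atil ≤ P {ω | max (H ω - Y ω) 0 ≤ c}) := by
  refine ⟨hmax _ (measurableSet_le (by fun_prop) measurable_const) fun Q hQ => ?_,
    fun Y _ hYge => measure_mono fun ω hω => ?_⟩
  · calc ∫ ω, {ω | max (H ω - X ω) 0 ≤ c}.indicator (fun ω => max (H ω - c) 0) ω ∂Q
          ≤ ∫ ω, X ω ∂Q :=
            integral_mono_of_nonneg (ae_of_all _ (Set.indicator_nonneg fun _ _ => le_max_right _ _))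
              (hXint Q hQ) (ae_of_all _ (indicator_max_sub_zero_le hX0))
      _ ≤ x₀ := hXc Q hQ
  · exact max_sub_zero_le_of_max_sub_zero_le hc (by simpa [hω] using hYge ω)

theorem incomplete_market_optimality
    {Ω : Type*} [MeasurableSpace Ω]
    (P : Measure Ω) [IsProbabilityMeasure P]
    (𝒬 : Set (Measure Ω)) (h𝒬ne : 𝒬.Nonempty)
    (h𝒬prob : ∀ Q ∈ 𝒬, IsProbabilityMeasure Q)
    (H : Ω → ℝ) (hHm : Measurable H) (hH0 : ∀ ω, 0 ≤ H ω)
    (hHint : ∀ Q ∈ 𝒬, Integrable H Q)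
    (c x₀ : ℝ) (hc : 0 ≤ c) (hx₀ : 0 ≤ x₀)
    (Atil : Set Ω) (hAtilm : MeasurableSet Atil)
    (hAtilc : ∀ Q ∈ 𝒬, ∫ ω, Set.indicator Atil (fun ω => max (H ω - c) 0) ω ∂Q ≤ x₀)
    (hmax : ∀ A : Set Ω, MeasurableSet A →
      (∀ Q ∈ 𝒬, ∫ ω, Set.indicator A (fun ω => max (H ω - c) 0) ω ∂Q ≤ x₀) →
      P A ≤ P Atil)
    (X : Ω → ℝ) (hXm : Measurable X) (hX0 : ∀ ω, 0 ≤ X ω)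
    (hXint : ∀ Q ∈ 𝒬, Integrable X Q)
    (hXc : ∀ Q ∈ 𝒬, ∫ ω, X ω ∂Q ≤ x₀) :
    P {ω | max (H ω - X ω) 0 ≤ c} ≤ P Atil ∧
    (∀ Y : Ω → ℝ, (∀ ω, 0 ≤ Y ω) →
      (∀ ω, Set.indicator Atil (fun ω => max (H ω - c) 0) ω ≤ Y ω) →
      P Atil ≤ P {ω | max (H ω - Y ω) 0 ≤ c}) :=
  incomplete_market_optimality_general P 𝒬 H hHm c x₀ hc Atil hmax X hXm hX0 hXint hXc
end
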